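/- The macroscopic entropy pair corresponding to S(v) = v²/2 is the physical energy pair: η(ρ,u) = ∫_ℝ χ(ρ, v-u)·(v²/2) dv = ρu²/2 + (κ/(γ-1)) ρ^γ, and G(ρ,u) = ∫_ℝ ((1-θ)u + θv) χ(ρ, v-u)·(v²/2) dv = ρu³/2 + (γκ/(γ-1)) ρ^γ u, for all ρ ≥ 0 and u ∈ ℝ. -/

import Mathlib

open MeasureTheory Real Set

noncomputable section

/-- J_λ = ∫_{-1}^1 (1-z²)^λ dz -/
def Jl (l : ℝ) : ℝ := ∫ z in (-1:ℝ)..1, (1 - z^2) ^ l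

/-- θ = (γ-1)/2 -/
def th (γ : ℝ) : ℝ := (γ - 1) / 2

/-- λ = 1/(γ-1) - 1/2 -/
def lam (γ : ℝ) : ℝ := 1 / (γ - 1) - 1 / 2

/-- a_γ = 2√(γκ)/(γ-1) -/
def ag (γ κ : ℝ) : ℝ := 2 * Real.sqrt (γ * κ) / (γ - 1)

/-- c_{γ,κ} = a_γ^{-2/(γ-1)} / J_λ -/
def cgk (γ κ : ℝ) : ℝ := ag γ κ ^ (-(2 / (γ - 1))) / Jl (lam γ)

/-- χ(ρ,ξ) = c_{γ,κ} (a_γ² ρ^{γ-1} - ξ²)_+^λ -/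
def chi (γ κ ρ ξ : ℝ) : ℝ :=
  cgk γ κ * (max (ag γ κ ^ 2 * ρ ^ (γ - 1) - ξ ^ 2) 0) ^ lam γ

/-- vector-valued Maxwellian -/
def Mx (γ κ ρ u ξ : ℝ) : ℝ × ℝ :=
  (chi γ κ ρ (ξ - u), ((1 - th γ) * u + th γ * ξ) * chi γ κ ρ (ξ - u))

/-- domain D = {f₀ > 0} ∪ {0} -/
def Dset : Set (ℝ × ℝ) := {f | 0 < f.1 ∨ f = 0}

/-- kinetic energy H(f,ξ) -/
def Hk (γ κ : ℝ) (f : ℝ × ℝ) (ξ : ℝ) : ℝ :=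
  if f = 0 then 0 else
    th γ / (1 - th γ) * (ξ ^ 2 / 2) * f.1
      + th γ / (2 * cgk γ κ ^ (1 / lam γ)) * (f.1 ^ (1 + 1 / lam γ) / (1 + 1 / lam γ))
      + 1 / (1 - th γ) * (1 / 2) * (f.2 ^ 2 / f.1)
      - th γ / (1 - th γ) * ξ * f.2

/-- u(f,ξ), inverse relation to f = M(ρ,u,ξ) -/
def uf (γ : ℝ) (f : ℝ × ℝ) (ξ : ℝ) : ℝ := (f.2 / f.1 - th γ * ξ) / (1 - th γ)

/-- ρ(f,ξ), inverse relation to f = M(ρ,u,ξ) -/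
def rf (γ κ : ℝ) (f : ℝ × ℝ) (ξ : ℝ) : ℝ :=
  ag γ κ ^ (-(2 / (γ - 1))) *
    (((f.2 / f.1 - ξ) / (1 - th γ)) ^ 2 + (f.1 / cgk γ κ) ^ (1 / lam γ)) ^ (1 / (γ - 1))

/-- kinetic Riemann invariant ω₁(f,ξ) -/
def om1 (γ κ : ℝ) (f : ℝ × ℝ) (ξ : ℝ) : ℝ :=
  uf γ f ξ - ag γ κ * rf γ κ f ξ ^ th γ

/-- kinetic Riemann invariant ω₂(f,ξ) -/
def om2 (γ κ : ℝ) (f : ℝ × ℝ) (ξ : ℝ) : ℝ :=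
  uf γ f ξ + ag γ κ * rf γ κ f ξ ^ th γ

/-- Υ_{l}(z) = ∫_1^z (y²-1)^l dy -/
def Ups (l z : ℝ) : ℝ := ∫ y in (1:ℝ)..z, (y ^ 2 - 1) ^ l

/-- entropy kernel Φ(ρ,u,ξ,v) -/
def Phi (γ κ ρ u ξ v : ℝ) : ℝ :=
  let w1 := u - ag γ κ * ρ ^ th γ
  let w2 := u + ag γ κ * ρ ^ th γ
  if w1 < ξ ∧ ξ < w2 ∧ w1 < v ∧ v < w2 then
    (1 - th γ) ^ 2 / th γ * (cgk γ κ / Jl (lam γ)) * |ξ - v| ^ (2 * lam γ - 1) *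
      Ups (lam γ - 1) (((ξ + v) * (w1 + w2) - 2 * (w1 * w2 + ξ * v)) / ((w2 - w1) * |ξ - v|))
  else 0

/-- kinetic entropy H_S(f,ξ) -/
def HS (γ κ : ℝ) (S : ℝ → ℝ) (f : ℝ × ℝ) (ξ : ℝ) : ℝ :=
  if f = 0 then 0 else ∫ v : ℝ, Phi γ κ (rf γ κ f ξ) (uf γ f ξ) ξ v * S v

/-- kinetic invariant domain D̃_ξ -/
def Dtil (γ κ ωmin ωmax ξ : ℝ) : Set (ℝ × ℝ) :=
  {f | f ∈ Dset ∧ (f = 0 ∨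
    (ωmin ≤ om1 γ κ f ξ ∧ om1 γ κ f ξ ≤ om2 γ κ f ξ ∧ om2 γ κ f ξ ≤ ωmax))}

/-- T_S(ρ,u) (subdifferential of η_S) -/
def TS (γ κ : ℝ) (S : ℝ → ℝ) (ρ u : ℝ) : ℝ × ℝ :=
  ((1 / Jl (lam γ)) * ∫ z in (-1:ℝ)..1, (1 - z ^ 2) ^ lam γ *
      (S (u + ag γ κ * ρ ^ th γ * z)
        + (th γ * ag γ κ * ρ ^ th γ * z - u) * deriv S (u + ag γ κ * ρ ^ th γ * z)),
   (1 / Jl (lam γ)) * ∫ z in (-1:ℝ)..1, (1 - z ^ 2) ^ lam γ *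
      deriv S (u + ag γ κ * ρ ^ th γ * z))

/-- inner product on ℝ² -/
def dot (a b : ℝ × ℝ) : ℝ := a.1 * b.1 + a.2 * b.2

/-! Shifting by `u`, the integrals become moments of the Maxwellian `χ(ρ, ·)`, a rescaled copy of
the weight `(1 - z²)^λ` on `[-1, 1]` supported on `|ξ| ≤ b := a_γ ρ^θ`. The normalisation
`c_{γ,κ}` makes its mass `ρ`; odd moments vanish and integration by parts gives
`∫ (1 - z²)^λ z² = J_λ / (2λ + 3)`, so the second moment is `ρ b² / (2λ + 3) = 2κ ρ^γ / (γ - 1)`. -/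

lemma integral_neg_self_eq_zero_of_odd {f : ℝ → ℝ} (hf : ∀ x, f (-x) = -f x) (a : ℝ) :
    ∫ x in -a..a, f x = 0 := by
  have h := intervalIntegral.integral_comp_neg (a := -a) (b := a) f
  simp only [hf, intervalIntegral.integral_neg, neg_neg] at h
  linarith

section Weight

variable {l : ℝ}

lemma continuous_one_sub_sq_rpow (hl : 0 ≤ l) : Continuous fun z : ℝ => (1 - z ^ 2) ^ l :=
  (continuous_const.sub (continuous_pow 2)).rpow_const fun _ => Or.inr hl

lemma one_sub_sq_nonneg_of_mem_uIcc {z : ℝ} (hz : z ∈ uIcc (-1 : ℝ) 1) : 0 ≤ 1 - z ^ 2 := by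
  rw [uIcc_of_le (by norm_num)] at hz
  nlinarith [hz.1, hz.2]

lemma Jl_pos (hl : 0 ≤ l) : 0 < Jl l :=
  intervalIntegral.intervalIntegral_pos_of_pos_on
    ((continuous_one_sub_sq_rpow hl).intervalIntegrable _ _)
    (fun _ hz => rpow_pos_of_pos (by nlinarith [hz.1, hz.2]) _) (by norm_num)

lemma integral_one_sub_sq_rpow_mul_odd {h : ℝ → ℝ} (hodd : ∀ z, h (-z) = -h z) :
    ∫ z in (-1 : ℝ)..1, (1 - z ^ 2) ^ l * h z = 0 :=
  integral_neg_self_eq_zero_of_odd (fun z => by rw [hodd, neg_sq, mul_neg]) 1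

lemma integral_one_sub_sq_rpow_mul_sq (hl : 0 ≤ l) :
    ∫ z in (-1 : ℝ)..1, (1 - z ^ 2) ^ l * z ^ 2 = Jl l / (2 * l + 3) := by
  have hw := continuous_one_sub_sq_rpow hl
  -- `z (1 - z²)^(l+1)` is a primitive vanishing at `±1`
  have hderiv : ∀ z ∈ uIcc (-1 : ℝ) 1, HasDerivAt (fun z => z * (1 - z ^ 2) ^ (l + 1))
      ((1 - z ^ 2) ^ l - (2 * l + 3) * ((1 - z ^ 2) ^ l * z ^ 2)) z := by
    intro z hz
    refine ((hasDerivAt_id' z).mul (((hasDerivAt_pow 2 z).const_sub 1).rpow_const (p := l + 1)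
      (Or.inr (by linarith)))).congr_deriv ?_
    rw [add_sub_cancel_right, rpow_add_one' (one_sub_sq_nonneg_of_mem_uIcc hz) (by linarith)]
    push_cast
    ring
  have hint : IntervalIntegrable (fun z => (1 - z ^ 2) ^ l - (2 * l + 3) * ((1 - z ^ 2) ^ l * z ^ 2))
      volume (-1) 1 := by
    apply Continuous.intervalIntegrable; fun_prop
  have hFTC := intervalIntegral.integral_eq_sub_of_hasDerivAt hderiv hint
  rw [intervalIntegral.integral_sub (hw.intervalIntegrable _ _)
    (by apply Continuous.intervalIntegrable; fun_prop), intervalIntegral.integral_const_mul] at hFTC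
  norm_num [zero_rpow (show l + 1 ≠ 0 by linarith)] at hFTC
  rw [eq_div_iff (by linarith), Jl]
  linarith

lemma integral_one_sub_sq_rpow_mul_cubic (hl : 0 ≤ l) (A B C D : ℝ) :
    ∫ z in (-1 : ℝ)..1, (1 - z ^ 2) ^ l * (A + B * z + C * z ^ 2 + D * z ^ 3)
      = (A + C / (2 * l + 3)) * Jl l := by
  have hint : ∀ n : ℕ, ∀ c : ℝ, IntervalIntegrable (fun z => c * ((1 - z ^ 2) ^ l * z ^ n))
      volume (-1) 1 := fun n c => by apply Continuous.intervalIntegrable; fun_prop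
  have hsplit : (fun z : ℝ => (1 - z ^ 2) ^ l * (A + B * z + C * z ^ 2 + D * z ^ 3))
      = fun z => A * ((1 - z ^ 2) ^ l * z ^ 0) + B * ((1 - z ^ 2) ^ l * z ^ 1)
          + C * ((1 - z ^ 2) ^ l * z ^ 2) + D * ((1 - z ^ 2) ^ l * z ^ 3) := by
    funext z; ring
  rw [hsplit, intervalIntegral.integral_add (((hint 0 A).add (hint 1 B)).add (hint 2 C)) (hint 3 D),
    intervalIntegral.integral_add ((hint 0 A).add (hint 1 B)) (hint 2 C),
    intervalIntegral.integral_add (hint 0 A) (hint 1 B)]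
  simp only [intervalIntegral.integral_const_mul, pow_zero, mul_one, pow_one,
    integral_one_sub_sq_rpow_mul_sq hl,
    integral_one_sub_sq_rpow_mul_odd (h := fun z => z) (fun z => rfl),
    integral_one_sub_sq_rpow_mul_odd (h := fun z => z ^ 3) (fun z => by ring)]
  rw [Jl]
  ring

lemma integral_max_sq_sub_sq_rpow_mul (hl : 0 < l) {b : ℝ} (hb : 0 < b) (g : ℝ → ℝ) :
    ∫ ξ, max (b ^ 2 - ξ ^ 2) 0 ^ l * g ξ
      = b ^ (2 * l + 1) * ∫ z in (-1 : ℝ)..1, (1 - z ^ 2) ^ l * g (b * z) := by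
  set f : ℝ → ℝ := fun ξ => max (b ^ 2 - ξ ^ 2) 0 ^ l * g ξ
  have hsupp : ∀ ξ ∉ Ioc (-b) b, f ξ = 0 := by
    intro ξ hξ
    have : b ^ 2 - ξ ^ 2 ≤ 0 := by
      rw [mem_Ioc, not_and_or, not_lt, not_le] at hξ
      rcases hξ with h | h <;> nlinarith
    simp only [f, max_eq_right this, zero_rpow hl.ne', zero_mul]
  have hscale : ∀ z ∈ uIcc (-1 : ℝ) 1, f (b * z) = b ^ (2 * l) * ((1 - z ^ 2) ^ l * g (b * z)) := by
    intro z hz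
    have hz2 := one_sub_sq_nonneg_of_mem_uIcc hz
    simp only [f]
    rw [max_eq_left (by nlinarith), show b ^ 2 - (b * z) ^ 2 = b ^ 2 * (1 - z ^ 2) by ring,
      mul_rpow (by positivity) hz2, ← rpow_natCast, ← rpow_mul hb.le]
    push_cast
    ring
  calc ∫ ξ, f ξ = ∫ ξ in (-b)..b, f ξ := by
        rw [intervalIntegral.integral_of_le (by linarith),
          setIntegral_eq_integral_of_forall_compl_eq_zero hsupp]
    _ = b * ∫ z in (-1 : ℝ)..1, f (b * z) := by
        rw [intervalIntegral.integral_comp_mul_left f hb.ne', smul_eq_mul, mul_neg_one, mul_one,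
          mul_inv_cancel_left₀ hb.ne']
    _ = _ := by
        rw [intervalIntegral.integral_congr hscale, intervalIntegral.integral_const_mul,
          rpow_add hb, rpow_one]
        ring

end Weight

section Maxwellian

variable {γ κ : ℝ}

lemma lam_pos (hγ : 1 < γ) (hγ' : γ < 3) : 0 < lam γ := by
  have : 1 / 2 < 1 / (γ - 1) := one_div_lt_one_div_of_lt (by linarith) (by linarith)
  rw [lam]
  linarith

lemma two_mul_lam_add_one (γ : ℝ) : 2 * lam γ + 1 = 2 / (γ - 1) := by
  rw [lam]; ring

lemma ag_pos (hκ : 0 < κ) (hγ : 1 < γ) : 0 < ag γ κ := by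
  have : 0 < sqrt (γ * κ) := sqrt_pos.mpr (by positivity)
  rw [ag]
  have : 0 < γ - 1 := by linarith
  positivity

lemma ag_sq (hκ : 0 ≤ κ) (hγ : 0 ≤ γ) : ag γ κ ^ 2 = 4 * γ * κ / (γ - 1) ^ 2 := by
  rw [ag, div_pow, mul_pow, sq_sqrt (by positivity)]
  ring

lemma chi_zero_left (hγ : 1 < γ) (hl : lam γ ≠ 0) (ξ : ℝ) : chi γ κ 0 ξ = 0 := by
  rw [chi, zero_rpow (by linarith), mul_zero, zero_sub,
    max_eq_right (neg_nonpos.mpr (sq_nonneg ξ)), zero_rpow hl, mul_zero]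

lemma chi_eq {ρ : ℝ} (hρ : 0 ≤ ρ) (ξ : ℝ) :
    chi γ κ ρ ξ = cgk γ κ * max ((ag γ κ * ρ ^ th γ) ^ 2 - ξ ^ 2) 0 ^ lam γ := by
  rw [chi, mul_pow, ← rpow_mul_natCast hρ, th]
  norm_num

lemma integral_chi_mul (hκ : 0 < κ) (hγ : 1 < γ) (hγ' : γ < 3) {ρ : ℝ} (hρ : 0 < ρ)
    (g : ℝ → ℝ) :
    ∫ ξ, chi γ κ ρ ξ * g ξ
      = ρ / Jl (lam γ) * ∫ z in (-1 : ℝ)..1, (1 - z ^ 2) ^ lam γ * g (ag γ κ * ρ ^ th γ * z) := by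
  have ha := ag_pos hκ hγ
  have hb : 0 < ag γ κ * ρ ^ th γ := mul_pos ha (rpow_pos_of_pos hρ _)
  have : γ - 1 ≠ 0 := by linarith
  have hmass : cgk γ κ * (ag γ κ * ρ ^ th γ) ^ (2 * lam γ + 1) = ρ / Jl (lam γ) := by
    rw [two_mul_lam_add_one, mul_rpow ha.le (rpow_nonneg hρ.le _), ← rpow_mul hρ.le, cgk, th,
      show (γ - 1) / 2 * (2 / (γ - 1)) = 1 by field_simp, rpow_one, rpow_neg ha.le]
    field_simp
  simp_rw [chi_eq hρ.le, mul_assoc, integral_const_mul,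
    integral_max_sq_sub_sq_rpow_mul (lam_pos hγ hγ') hb, ← mul_assoc, hmass]

lemma integral_chi_mul_cubic (hκ : 0 < κ) (hγ : 1 < γ) (hγ' : γ < 3) {ρ : ℝ} (hρ : 0 ≤ ρ)
    (A B C D : ℝ) :
    ∫ ξ, chi γ κ ρ ξ * (A + B * ξ + C * ξ ^ 2 + D * ξ ^ 3)
      = ρ * A + 2 * κ / (γ - 1) * ρ ^ γ * C := by
  have hl := lam_pos hγ hγ'
  have hγ1 : γ - 1 ≠ 0 := by linarith
  have hγ0 : γ ≠ 0 := by linarith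
  rcases hρ.eq_or_lt with rfl | hρ
  · simp [chi_zero_left hγ hl.ne', zero_rpow hγ0]
  set b := ag γ κ * ρ ^ th γ
  have hb2 : b ^ 2 = 4 * γ * κ / (γ - 1) ^ 2 * ρ ^ (γ - 1) := by
    rw [mul_pow, ag_sq hκ.le (by linarith), ← rpow_mul_natCast hρ.le, th]
    norm_num
  have hργ : ρ * ρ ^ (γ - 1) = ρ ^ γ := by
    rw [← rpow_one_add' hρ.le (by linarith), add_sub_cancel]
  rw [integral_chi_mul hκ hγ hγ' hρ,
    show (fun z => (1 - z ^ 2) ^ lam γ * (A + B * (b * z) + C * (b * z) ^ 2 + D * (b * z) ^ 3))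
      = fun z => (1 - z ^ 2) ^ lam γ * (A + B * b * z + C * b ^ 2 * z ^ 2 + D * b ^ 3 * z ^ 3) by
      funext z; ring,
    integral_one_sub_sq_rpow_mul_cubic hl.le, hb2, show 2 * lam γ + 3 = 2 * γ / (γ - 1) by
      rw [lam]; field_simp; ring, ← hργ]
  have := (Jl_pos hl.le).ne'
  field_simp
  ring

end Maxwellian

theorem stmt8 (γ κ : ℝ) (hκ : 0 < κ) (hγ : 1 < γ) (hγ' : γ < 3)
    (ρ u : ℝ) (hρ : 0 ≤ ρ) :
    (∫ v : ℝ, chi γ κ ρ (v - u) * (v ^ 2 / 2))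
        = ρ * u ^ 2 / 2 + κ / (γ - 1) * ρ ^ γ ∧
    (∫ v : ℝ, ((1 - th γ) * u + th γ * v) * chi γ κ ρ (v - u) * (v ^ 2 / 2))
        = ρ * u ^ 3 / 2 + γ * κ / (γ - 1) * ρ ^ γ * u := by
  have moment := integral_chi_mul_cubic hκ hγ hγ' hρ
  constructor
  · rw [← integral_add_right_eq_self _ u]
    simp_rw [add_sub_cancel_right]
    calc _ = ∫ ξ, chi γ κ ρ ξ * (u ^ 2 / 2 + u * ξ + 1 / 2 * ξ ^ 2 + 0 * ξ ^ 3) := by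
          congr 1; funext ξ; ring
      _ = _ := by rw [moment]; ring
  · rw [← integral_add_right_eq_self _ u]
    simp_rw [add_sub_cancel_right]
    calc _ = ∫ ξ, chi γ κ ρ ξ * (u ^ 3 / 2 + (2 + th γ) / 2 * u ^ 2 * ξ + γ * u / 2 * ξ ^ 2
            + th γ / 2 * ξ ^ 3) := by
          congr 1; funext ξ; rw [th]; ring
      _ = _ := by rw [moment]; ring
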